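/- For every positive integer N, the truncated Schur Q-multiple zeta function of a one-row shape (r) satisfies ζ_{(r)}^{Q,N}(s_1,...,s_r) = Σ_{ℓ} (-1)^{r - dep(ℓ)} 2^{dep(ℓ)} ζ^{⋆,N}(ℓ), where ℓ ranges over all compositions obtained from (s_1,...,s_r) by replacing each separator by a comma or a plus, and ζ^{⋆,N}(t_1,...,t_k) = Σ_{0 < m_1 ≤ ... ≤ m_k ≤ N} m_1^{-t_1}···m_k^{-t_k} is the truncated multiple zeta star function. -/

import Mathlib

noncomputable section

/-! Marked letters `{1' < 1 < 2' < 2 < ⋯}` are encoded by positive integer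
ranks: `i' = 2i-1` (odd), `i = 2i` (even), `|rank| = (rank+1)/2`. -/

/-- Replace each separator of the index `(a, b_1, …, b_m)` by a comma
(`true`) or a plus (`false`), producing the resulting composition. -/
def fillIndex : ℂ → List (Bool × ℂ) → List ℂ
  | a, [] => [a]
  | a, (true, b) :: rest => a :: fillIndex b rest
  | a, (false, b) :: rest => fillIndex (a + b) rest

/-- Truncated multiple zeta star value with summation starting at `lo`:
`∑_{lo ≤ m_1 ≤ m_2 ≤ ⋯ ≤ N} ∏ m_i^{-t_i}`. -/
def zetaStarNfrom (N : ℕ) : ℕ → List ℂ → ℂ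
  | _, [] => 1
  | lo, t :: rest => ∑ m ∈ Finset.Icc lo N, (m : ℂ) ^ (-t) * zetaStarNfrom N m rest

/-- The truncated multiple zeta star function
`ζ^{⋆,N}(t_1,…,t_k) = ∑_{0 < m_1 ≤ ⋯ ≤ m_k ≤ N} m_1^{-t_1} ⋯ m_k^{-t_k}`. -/
def zetaStarN (N : ℕ) (l : List ℂ) : ℂ := zetaStarNfrom N 1 l

/-- The truncated one-row Schur `Q`-multiple zeta function
`ζ_{(r)}^{Q,N}(s_1,…,s_r)`: the sum over one-row semi-standard marked shifted
tableaux (weakly increasing sequences of marked letters `≤ N` with no repeated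
primed letter) of `∏ |m_i|^{-s_i}`. -/
def zetaQrowN (N r : ℕ) (s : Fin r → ℂ) : ℂ :=
  ∑' M : {M : Fin r → ℕ // (∀ i, 1 ≤ M i ∧ M i ≤ 2 * N) ∧ Monotone M ∧
      (∀ i j, i ≠ j → M i = M j → ¬ Odd (M i))},
    ∏ i, ((((M.1 i + 1) / 2 : ℕ)) : ℂ) ^ (-(s i))

/-! Group the letters of a one-row marked tableau by absolute value: the letters of absolute
value `j` form a block which either starts with `j'` or does not, so `ζ_{(r)}^{Q,N}(s)` is the sum
over `0 < m_1 ≤ ⋯ ≤ m_r ≤ N` of `2^{#{m_1,…,m_r}} ∏ m_i^{-s_i}`. Expanding each `ζ^{⋆,N}(ℓ)` as a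
sum over the same weakly increasing sequences, a comma contributes `2` and a plus contributes `-1`
while forcing `m_i = m_{i+1}`, so each separator contributes `2 - [m_i = m_{i+1}]`, that is `2`
for a new value and `1` otherwise: the right-hand side is the same sum. Both reductions are
recursions on the first letter. -/

open Finset

-- A primed letter (odd rank) cannot repeat, so it forces the next rank to be larger.
def nextRank (k : ℕ) : ℕ := k + k % 2

def IsMarkedRow (N lo : ℕ) {r : ℕ} (M : Fin r → ℕ) : Prop :=
  (∀ i, lo ≤ M i ∧ M i ≤ 2 * N) ∧ Monotone M ∧ ∀ i j, i ≠ j → M i = M j → ¬ Odd (M i)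

def markedRowSum (N lo : ℕ) {r : ℕ} (s : Fin r → ℂ) : ℂ :=
  ∑' M : {M : Fin r → ℕ // IsMarkedRow N lo M}, ∏ i, (((M.1 i + 1) / 2 : ℕ) : ℂ) ^ (-(s i))

lemma Fin.monotone_cons_iff {α : Type*} [Preorder α] {n : ℕ} {a : α} {f : Fin n → α} :
    Monotone (Fin.cons a f : Fin (n + 1) → α) ↔ (∀ j, a ≤ f j) ∧ Monotone f := by
  simpa only [monotone_iff_forall_lt] using! Fin.liftFun_cons (· ≤ ·) (f := f) (a := a)

lemma nextRank_le_iff {k x : ℕ} : nextRank k ≤ x ↔ k ≤ x ∧ (x = k → ¬ Odd k) := by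
  rw [nextRank, Nat.odd_iff]; omega

lemma isMarkedRow_cons {N lo r k : ℕ} {M : Fin r → ℕ} :
    IsMarkedRow N lo (Fin.cons k M : Fin (r + 1) → ℕ) ↔
      (lo ≤ k ∧ k ≤ 2 * N) ∧ IsMarkedRow N (nextRank k) M := by
  simp only [IsMarkedRow, Fin.monotone_cons_iff, Fin.forall_fin_succ, Fin.cons_zero, Fin.cons_succ,
    nextRank_le_iff, ne_eq, Fin.succ_ne_zero, (Fin.succ_ne_zero _).symm, Fin.succ_inj,
    not_true_eq_false, not_false_eq_true, false_implies, true_implies, true_and, forall_and]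
  constructor
  · rintro ⟨⟨⟨hlo, -⟩, hk, hM⟩, ⟨hkM, hmono⟩, hodd, -, hodd'⟩
    exact ⟨⟨hlo, hk⟩, ⟨⟨hkM, fun i h => h ▸ hodd i h⟩, hM⟩, hmono, hodd'⟩
  · rintro ⟨⟨hlo, hk⟩, ⟨⟨hkM, hodd⟩, hM⟩, hmono, hodd'⟩
    exact ⟨⟨⟨hlo, fun i => hlo.trans (hkM i)⟩, hk, hM⟩, ⟨hkM, hmono⟩,
      fun i h => h ▸ hodd i h, fun i h => hodd i h.symm, hodd'⟩

instance (N lo r : ℕ) : Finite {M : Fin r → ℕ // IsMarkedRow N lo M} :=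
  Finite.of_injective (fun M i => (⟨M.1 i, Nat.lt_succ_of_le (M.2.1 i).2⟩ : Fin (2 * N + 1)))
    fun _ _ h => Subtype.ext <| funext fun i => congrArg Fin.val (congrFun h i)

def markedRowConsEquiv (N lo r : ℕ) :
    (Σ k : Icc lo (2 * N), {M : Fin r → ℕ // IsMarkedRow N (nextRank k) M}) ≃
      {M : Fin (r + 1) → ℕ // IsMarkedRow N lo M} where
  toFun p := ⟨Fin.cons p.1.1 p.2.1, isMarkedRow_cons.2 ⟨mem_Icc.1 p.1.2, p.2.2⟩⟩
  invFun M :=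
    have h := isMarkedRow_cons.1 ((Fin.cons_self_tail M.1).symm ▸ M.2)
    ⟨⟨M.1 0, mem_Icc.2 h.1⟩, ⟨Fin.tail M.1, h.2⟩⟩
  left_inv _ := rfl
  right_inv M := Subtype.ext (Fin.cons_self_tail M.1)

lemma markedRowSum_zero (N lo : ℕ) (s : Fin 0 → ℂ) : markedRowSum N lo s = 1 := by
  have : Unique {M : Fin 0 → ℕ // IsMarkedRow N lo M} :=
    { default := ⟨Fin.elim0, fun i => i.elim0, fun i => i.elim0, fun i => i.elim0⟩
      uniq := fun _ => Subtype.ext (funext fun i => i.elim0) }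
  simp [markedRowSum, tsum_fintype]

lemma markedRowSum_cons (N lo : ℕ) {r : ℕ} (a : ℂ) (s : Fin r → ℂ) :
    markedRowSum N lo (Fin.cons a s : Fin (r + 1) → ℂ) =
      ∑ k ∈ Icc lo (2 * N), (((k + 1) / 2 : ℕ) : ℂ) ^ (-a) * markedRowSum N (nextRank k) s := by
  rw [markedRowSum, ← (markedRowConsEquiv N lo r).tsum_eq,
    Summable.tsum_sigma' (fun _ => .of_finite) .of_finite, ← Finset.tsum_subtype]
  refine tsum_congr fun k => ?_
  rw [markedRowSum, ← tsum_mul_left]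
  exact tsum_congr fun M => Fin.prod_univ_succ _

lemma sum_Ioc_two_mul {M : Type*} [AddCommMonoid M] (f : ℕ → M) (m N : ℕ) :
    ∑ k ∈ Ioc (2 * m) (2 * N), f k = ∑ j ∈ Ioc m N, (f (2 * j - 1) + f (2 * j)) := by
  induction N with
  | zero => simp
  | succ N ih =>
    rcases le_or_gt m N with h | h
    · rw [sum_Ioc_succ_top h, ← ih, show 2 * (N + 1) = 2 * N + 1 + 1 by ring,
        sum_Ioc_succ_top (by omega), sum_Ioc_succ_top (by omega), add_assoc]
      rfl
    · rw [Ioc_eq_empty (by omega), Ioc_eq_empty (by omega), sum_empty, sum_empty]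

-- `∑_{m ≤ m_1 ≤ ⋯ ≤ m_k ≤ N} 2^{#({m_1,…,m_k} \ {m})} ∏ m_i^{-t_i}`
def starSumTwoPow (N : ℕ) : ℕ → List ℂ → ℂ
  | _, [] => 1
  | m, t :: rest => (m : ℂ) ^ (-t) * starSumTwoPow N m rest +
      2 * ∑ j ∈ Ioc m N, (j : ℂ) ^ (-t) * starSumTwoPow N j rest

lemma starSumTwoPow_cons_eq_sub {N m : ℕ} (hm : m ≤ N) (b : ℂ) (l : List ℂ) :
    starSumTwoPow N m (b :: l) =
      2 * ∑ j ∈ Icc m N, (j : ℂ) ^ (-b) * starSumTwoPow N j l -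
        (m : ℂ) ^ (-b) * starSumTwoPow N m l := by
  rw [starSumTwoPow, ← add_sum_Ioc_eq_sum_Icc hm]
  ring

-- The letters `j'` (rank `2j-1`) and `j` (rank `2j`) have the same weight and successor bound.
lemma sum_Ioc_two_mul_rank (a : ℂ) (g : ℕ → ℂ) (m N : ℕ) :
    ∑ k ∈ Ioc (2 * m) (2 * N), (((k + 1) / 2 : ℕ) : ℂ) ^ (-a) * g (nextRank k) =
      2 * ∑ j ∈ Ioc m N, (j : ℂ) ^ (-a) * g (2 * j) := by
  rw [sum_Ioc_two_mul, mul_sum]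
  refine sum_congr rfl fun j hj => ?_
  have hj := (mem_Ioc.1 hj).1
  rw [show (2 * j - 1 + 1) / 2 = j by omega, show (2 * j + 1) / 2 = j by omega,
    show nextRank (2 * j - 1) = 2 * j by simp [nextRank]; omega,
    show nextRank (2 * j) = 2 * j by simp [nextRank]]
  ring

lemma markedRowSum_two_mul {N m r : ℕ} (hm : m ≤ N) (s : Fin r → ℂ) :
    markedRowSum N (2 * m) s = starSumTwoPow N m (List.ofFn s) := by
  induction r generalizing m with
  | zero => rw [markedRowSum_zero, List.ofFn_zero, starSumTwoPow]
  | succ r ih =>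
    rw [← Fin.cons_self_tail s, markedRowSum_cons, List.ofFn_cons, starSumTwoPow,
      ← add_sum_Ioc_eq_sum_Icc (by omega),
      sum_Ioc_two_mul_rank _ (markedRowSum N · (Fin.tail s)),
      show (2 * m + 1) / 2 = m by omega, show nextRank (2 * m) = 2 * m by simp [nextRank], ih hm]
    congr 2
    exact sum_congr rfl fun j hj => by rw [ih (mem_Ioc.1 hj).2]

lemma markedRowSum_one_cons (N : ℕ) {r : ℕ} (a : ℂ) (s : Fin r → ℂ) :
    markedRowSum N 1 (Fin.cons a s : Fin (r + 1) → ℂ) =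
      2 * ∑ j ∈ Icc 1 N, (j : ℂ) ^ (-a) * starSumTwoPow N j (List.ofFn s) := by
  rw [markedRowSum_cons, show Icc 1 (2 * N) = Ioc (2 * 0) (2 * N) from Icc_add_one_left_eq_Ioc _ _,
    sum_Ioc_two_mul_rank _ (markedRowSum N · s), ← Icc_add_one_left_eq_Ioc]
  congr 1
  exact sum_congr rfl fun j hj => by rw [markedRowSum_two_mul (mem_Icc.1 hj).2]

lemma length_fillIndex_le (a : ℂ) (l : List (Bool × ℂ)) :
    (fillIndex a l).length ≤ l.length + 1 := by
  induction l generalizing a with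
  | nil => simp [fillIndex]
  | cons p l ih =>
    obtain ⟨_ | _, b⟩ := p
    · exact (ih (a + b)).trans (by simp)
    · simpa [fillIndex] using ih b

lemma sum_fillIndex_ofFn_succ {M : Type*} [AddCommMonoid M] (f : List ℂ → M) {n : ℕ} (a : ℂ)
    (t : Fin (n + 1) → ℂ) :
    ∑ c : Fin (n + 1) → Bool, f (fillIndex a (List.ofFn fun j => (c j, t j))) =
      ∑ c : Fin n → Bool, f (a :: fillIndex (t 0) (List.ofFn fun j => (c j, t j.succ))) +
        ∑ c : Fin n → Bool, f (fillIndex (a + t 0) (List.ofFn fun j => (c j, t j.succ))) := by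
  rw [← (Fin.consEquiv fun _ => Bool).sum_comp, Fintype.sum_prod_type, Fintype.sum_bool]
  simp [Fin.consEquiv, List.ofFn_succ, fillIndex]

def dualSummand (N lo n : ℕ) (l : List ℂ) : ℂ :=
  (-1 : ℂ) ^ ((n + 1) - l.length) * 2 ^ l.length * zetaStarNfrom N lo l

lemma dualSummand_cons (N lo n : ℕ) (a : ℂ) (l : List ℂ) :
    dualSummand N lo (n + 1) (a :: l) =
      2 * ∑ m ∈ Icc lo N, (m : ℂ) ^ (-a) * dualSummand N m n l := by
  simp only [dualSummand, zetaStarNfrom, List.length_cons, Nat.add_sub_add_right, mul_sum]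
  exact sum_congr rfl fun _ _ => by ring

lemma dualSummand_succ {N lo n : ℕ} {l : List ℂ} (hl : l.length ≤ n + 1) :
    dualSummand N lo (n + 1) l = -dualSummand N lo n l := by
  rw [dualSummand, dualSummand, show n + 1 + 1 - l.length = n + 1 - l.length + 1 by omega, pow_succ]
  ring

lemma natCast_cpow_neg_add {m : ℕ} (hm : m ≠ 0) (a b : ℂ) :
    (m : ℂ) ^ (-(a + b)) = (m : ℂ) ^ (-a) * (m : ℂ) ^ (-b) := by
  rw [neg_add, Complex.cpow_add _ _ (Nat.cast_ne_zero.2 hm)]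

lemma sum_dualSummand_fillIndex (N : ℕ) {lo : ℕ} (hlo : 1 ≤ lo) {n : ℕ} (a : ℂ)
    (t : Fin n → ℂ) :
    ∑ c : Fin n → Bool, dualSummand N lo n (fillIndex a (List.ofFn fun j => (c j, t j))) =
      2 * ∑ m ∈ Icc lo N, (m : ℂ) ^ (-a) * starSumTwoPow N m (List.ofFn t) := by
  induction n generalizing lo a with
  | zero => simp [dualSummand, fillIndex, zetaStarNfrom, starSumTwoPow]
  | succ n ih =>
    have hlen (b : ℂ) (c : Fin n → Bool) :
        (fillIndex b (List.ofFn fun j => (c j, t j.succ))).length ≤ n + 1 := by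
      simpa using length_fillIndex_le b (List.ofFn fun j => (c j, t j.succ))
    simp only [sum_fillIndex_ofFn_succ, dualSummand_cons, dualSummand_succ (hlen _ _),
      ← mul_sum, sum_neg_distrib]
    have hstep : ∀ m ∈ Icc lo N,
        ∑ c : Fin n → Bool, (m : ℂ) ^ (-a) *
            dualSummand N m n (fillIndex (t 0) (List.ofFn fun j => (c j, t j.succ))) -
          (m : ℂ) ^ (-(a + t 0)) * starSumTwoPow N m (List.ofFn fun j => t j.succ) =
        (m : ℂ) ^ (-a) * starSumTwoPow N m (List.ofFn t) := by
      intro m hm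
      have hm := mem_Icc.1 hm
      rw [← mul_sum, ih (hlo.trans hm.1), List.ofFn_succ, starSumTwoPow_cons_eq_sub hm.2,
        natCast_cpow_neg_add (by omega)]
      ring
    rw [sum_comm, ih hlo, ← sum_congr rfl hstep, sum_sub_distrib]
    ring

theorem zetaQrowN_eq_sum_zetaStarN_general (N n : ℕ) (s : Fin (n + 1) → ℂ) :
    zetaQrowN N (n + 1) s =
      ∑ c : Fin n → Bool,
        (-1 : ℂ) ^ ((n + 1) -
            (fillIndex (s 0) (List.ofFn fun j : Fin n => (c j, s j.succ))).length) *
          (2 : ℂ) ^ (fillIndex (s 0) (List.ofFn fun j : Fin n => (c j, s j.succ))).length *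
          zetaStarN N (fillIndex (s 0) (List.ofFn fun j : Fin n => (c j, s j.succ))) := by
  have hrow : zetaQrowN N (n + 1) s = markedRowSum N 1 (Fin.cons (s 0) (Fin.tail s)) := by
    rw [Fin.cons_self_tail]; rfl
  rw [hrow, markedRowSum_one_cons]
  exact (sum_dualSummand_fillIndex N le_rfl (s 0) (Fin.tail s)).symm

/-- **Dual decomposition of `ζ_{(r)}^{Q,N}` into truncated MZSVs.**
`ζ_{(r)}^{Q,N}(s_1,…,s_r) = Σ_ℓ (-1)^{r-dep(ℓ)} 2^{dep(ℓ)} ζ^{⋆,N}(ℓ)`, where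
`ℓ` ranges over all compositions obtained from `(s_1,…,s_r)` by replacing each
separator by a comma or a plus. -/
theorem zetaQrowN_eq_sum_zetaStarN (N n : ℕ) (hN : 0 < N) (s : Fin (n + 1) → ℂ) :
    zetaQrowN N (n + 1) s =
      ∑ c : Fin n → Bool,
        (-1 : ℂ) ^ ((n + 1) -
            (fillIndex (s 0) (List.ofFn fun j : Fin n => (c j, s j.succ))).length) *
          (2 : ℂ) ^ (fillIndex (s 0) (List.ofFn fun j : Fin n => (c j, s j.succ))).length *
          zetaStarN N (fillIndex (s 0) (List.ofFn fun j : Fin n => (c j, s j.succ))) :=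
  zetaQrowN_eq_sum_zetaStarN_general N n s
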